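/- arXiv:2308.00887 — 6 statements merged into one kernel-verified Lean document; each statement's English description precedes it below -/
import Mathlib

section
/- Finite max-decomposition of an arbitrary potential (Lemma 1): let n, d be natural numbers with n ≥ 1 and d ≥ 1, and let f : (Fin n → Fin d) → ℝ be any function. Then there exists a natural number Z ≥ 1 and a family ψ : Fin n → Fin d → Fin Z → ℝ such that for every x : Fin n → Fin d, f x equals the maximum over z : Fin Z of ∑ i : Fin n, ψ i (x i) z. -/
/-- Finite max-decomposition of an arbitrary potential (Lemma 1). -/
theorem max_decomposition_exists (n d : ℕ) (hn : 1 ≤ n) (hd : 1 ≤ d)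
    (f : (Fin n → Fin d) → ℝ) :
    ∃ (Z : ℕ) (hZ : 1 ≤ Z) (ψ : Fin n → Fin d → Fin Z → ℝ),
      ∀ x : Fin n → Fin d,
        f x = Finset.sup' Finset.univ ⟨⟨0, hZ⟩, Finset.mem_univ _⟩
          (fun z : Fin Z => ∑ i : Fin n, ψ i (x i) z) := by
  haveI : Nonempty (Fin d) := ⟨⟨0, hd⟩⟩
  haveI : Nonempty (Fin n → Fin d) := inferInstance
  set Z := Fintype.card (Fin n → Fin d) with hZdef
  have hZ : 1 ≤ Z := Fintype.card_pos
  let e : (Fin n → Fin d) ≃ Fin Z := Fintype.equivFin _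
  have hne : (Finset.univ : Finset (Fin n → Fin d)).Nonempty := Finset.univ_nonempty
  set B := Finset.univ.sup' hne (fun y => |f y|) with hBdef
  have hB : ∀ y, |f y| ≤ B := fun y => Finset.le_sup' (fun y => |f y|) (Finset.mem_univ y)
  have hB0 : 0 ≤ B := le_trans (abs_nonneg _) (hB Classical.ofNonempty)
  have hn0 : (0:ℝ) < n := by positivity
  have hsum : ∀ w : (Fin n → Fin d), (∑ _i : Fin n, f w / (n:ℝ)) = f w := by
    intro w
    rw [Finset.sum_const, Finset.card_univ, Fintype.card_fin, nsmul_eq_mul,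
      mul_div_cancel₀ _ (ne_of_gt hn0)]
  refine ⟨Z, hZ, fun i a z => if a = (e.symm z) i then f (e.symm z) / n else -(2*B+1), ?_⟩
  intro x
  have key : ∀ z : Fin Z,
      (∑ i : Fin n, (if x i = (e.symm z) i then f (e.symm z) / n else -(2*B+1))) ≤ f x := by
    intro z
    set y := e.symm z with hy
    by_cases hxy : y = x
    · rw [hxy]
      simp only [eq_self_iff_true, if_true]
      exact le_of_eq (hsum x)
    · obtain ⟨i0, hi0⟩ : ∃ i, x i ≠ y i := by
        by_contra h
        push_neg at h
        exact hxy (funext fun i => (h i).symm)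
      have hsplit := Finset.add_sum_erase Finset.univ
        (fun i => (if x i = y i then f y / n else -(2*B+1))) (Finset.mem_univ i0)
      rw [← hsplit]
      beta_reduce
      have h1 : (if x i0 = y i0 then f y / n else -(2*B+1)) = -(2*B+1) := if_neg hi0
      have h2 : ∑ i ∈ Finset.univ.erase i0,
          (if x i = y i then f y / n else -(2*B+1)) ≤ B := by
        have hterm : ∀ i ∈ Finset.univ.erase i0,
            (if x i = y i then f y / n else -(2*B+1)) ≤ B / n := by
          intro i _
          split
          · gcongr
            exact (le_abs_self _).trans (hB y)
          · have : (0:ℝ) ≤ B / n := by positivity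
            linarith
        calc ∑ i ∈ Finset.univ.erase i0, (if x i = y i then f y / n else -(2*B+1))
            ≤ (Finset.univ.erase i0).card • (B / n) :=
              Finset.sum_le_card_nsmul _ _ _ hterm
          _ ≤ n • (B / n) := by
              apply nsmul_le_nsmul_left (by positivity)
              calc (Finset.univ.erase i0).card ≤ Finset.univ.card := Finset.card_erase_le
                _ = n := by simp
          _ = B := by
              rw [nsmul_eq_mul, mul_div_cancel₀ _ (ne_of_gt hn0)]
      have hfx : -B ≤ f x := neg_le_of_abs_le (hB x)
      rw [h1]
      linarith
  have hattain : (∑ i : Fin n, (if x i = (e.symm (e x)) i then f (e.symm (e x)) / n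
      else -(2*B+1))) = f x := by
    simp only [Equiv.symm_apply_apply, eq_self_iff_true, if_true]
    exact hsum x
  apply le_antisymm
  · rw [← hattain]
    exact Finset.le_sup'
      (fun z : Fin Z => ∑ i : Fin n, if x i = (e.symm z) i then f (e.symm z) / (n:ℝ) else -(2*B+1))
      (Finset.mem_univ (e x))
  · exact Finset.sup'_le _ _ fun z _ => key z
end

section
/- Explicit max-decomposition construction: let n, d be natural numbers with n ≥ 1 and d ≥ 1, let f : (Fin n → Fin d) → ℝ satisfy 1 ≤ f x for all x, and let C : ℝ satisfy C > f x for all x. Define ψ : Fin n → Fin d → (Fin n → Fin d) → ℝ by ψ i v z = f z / n if v = z i, and ψ i v z = -C otherwise. Then for every x : Fin n → Fin d, f x equals the maximum over z : Fin n → Fin d of ∑ i : Fin n, ψ i (x i) z. -/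
/-- Explicit max-decomposition construction. -/
theorem max_decomposition_explicit (n d : ℕ) (hn : 1 ≤ n) (hd : 1 ≤ d)
    (f : (Fin n → Fin d) → ℝ) (hf : ∀ x, 1 ≤ f x)
    (C : ℝ) (hC : ∀ x, f x < C)
    (ψ : Fin n → Fin d → (Fin n → Fin d) → ℝ)
    (hψ : ∀ i v z, ψ i v z = if v = z i then f z / n else -C) :
    ∀ x : Fin n → Fin d,
      f x = Finset.sup' Finset.univ ⟨fun _ => ⟨0, hd⟩, Finset.mem_univ _⟩
        (fun z : Fin n → Fin d => ∑ i : Fin n, ψ i (x i) z) := by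
  intro x
  have hn0 : (0:ℝ) < n := by exact_mod_cast hn
  have hsumx : ∑ i : Fin n, ψ i (x i) x = f x := by
    have : ∀ i : Fin n, ψ i (x i) x = f x / n := by
      intro i; rw [hψ]; simp
    rw [Finset.sum_congr rfl (fun i _ => this i)]
    simp [Finset.sum_const]
    field_simp
  apply le_antisymm
  · rw [← hsumx]
    exact Finset.le_sup' (fun z : Fin n → Fin d => ∑ i : Fin n, ψ i (x i) z) (Finset.mem_univ x)
  · apply Finset.sup'_le
    intro z _
    by_cases hz : ∀ i, x i = z i
    · have : ∑ i : Fin n, ψ i (x i) z = f z := by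
        have : ∀ i : Fin n, ψ i (x i) z = f z / n := by
          intro i; rw [hψ]; simp [hz i]
        rw [Finset.sum_congr rfl (fun i _ => this i)]
        simp [Finset.sum_const]
        field_simp
      rw [this]
      have : z = x := funext fun i => (hz i).symm
      rw [this]
    · push_neg at hz
      obtain ⟨j, hj⟩ := hz
      have hsplit : ∑ i : Fin n, ψ i (x i) z
          = ψ j (x j) z + ∑ i ∈ Finset.univ.erase j, ψ i (x i) z :=
        (Finset.add_sum_erase _ _ (Finset.mem_univ j)).symm
      have hterm : ψ j (x j) z = -C := by rw [hψ]; simp [hj]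
      have hbound : ∑ i ∈ Finset.univ.erase j, ψ i (x i) z
          ≤ (n - 1) * (f z / n) := by
        calc ∑ i ∈ Finset.univ.erase j, ψ i (x i) z
            ≤ ∑ i ∈ Finset.univ.erase j, (f z / n) := by
              apply Finset.sum_le_sum
              intro i _
              rw [hψ]
              split
              · exact le_rfl
              · have h1 : (0:ℝ) ≤ f z / n := div_nonneg (le_trans zero_le_one (hf z)) hn0.le
                linarith [hC z, hf z]
          _ = (n - 1) * (f z / n) := by
              rw [Finset.sum_const, Finset.card_erase_of_mem (Finset.mem_univ j),
                Finset.card_univ, Fintype.card_fin, nsmul_eq_mul, Nat.cast_sub hn, Nat.cast_one]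
      have hfz : (n - 1 : ℝ) * (f z / n) ≤ f z := by
        rw [mul_div_assoc', div_le_iff₀ hn0]
        nlinarith [hf z]
      rw [hsplit, hterm]
      have := hC z
      have := hf x
      linarith
end

section
/- Equivalence of the decomposed Max-Product message update: let n, d, Z be natural numbers with n ≥ 1, d ≥ 1 and Z ≥ 1, let φ : Fin n → Fin d → Fin Z → ℝ, and define the factor log-potential θ : (Fin n → Fin d) → ℝ by θ x = maximum over z : Fin Z of ∑ j : Fin n, φ j (x j) z. Then for every pair of families b, m : Fin n → Fin d → ℝ, every i : Fin n and every v : Fin d, the maximum over x : Fin n → Fin d with x i = v of [θ x + ∑ j ∈ (Finset.univ \ {i}), (b j (x j) - m j (x j))] equals the maximum over z : Fin Z of [φ i v z + ∑ j ∈ (Finset.univ \ {i}), (maximum over u : Fin d of (φ j u z - m j u + b j u))]. -/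
/-- Equivalence of the decomposed Max-Product message update. -/
theorem decomposed_max_product_update (n d Z : ℕ) (hn : 1 ≤ n) (hd : 1 ≤ d) (hZ : 1 ≤ Z)
    (φ : Fin n → Fin d → Fin Z → ℝ)
    (θ : (Fin n → Fin d) → ℝ)
    (hθ : ∀ x, θ x = Finset.sup' Finset.univ ⟨⟨0, hZ⟩, Finset.mem_univ _⟩
      (fun z : Fin Z => ∑ j : Fin n, φ j (x j) z))
    (b m : Fin n → Fin d → ℝ) (i : Fin n) (v : Fin d) :
    Finset.sup' (Finset.univ.filter fun x : Fin n → Fin d => x i = v)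
        ⟨fun _ => v, Finset.mem_filter.mpr ⟨Finset.mem_univ _, rfl⟩⟩
        (fun x => θ x + ∑ j ∈ Finset.univ \ {i}, (b j (x j) - m j (x j)))
      = Finset.sup' Finset.univ ⟨⟨0, hZ⟩, Finset.mem_univ _⟩
          (fun z : Fin Z => φ i v z + ∑ j ∈ Finset.univ \ {i},
            Finset.sup' Finset.univ ⟨v, Finset.mem_univ v⟩
              (fun u : Fin d => φ j u z - m j u + b j u)) := by
  apply le_antisymm
  · apply Finset.sup'_le
    intro x hx
    have hxi : x i = v := (Finset.mem_filter.mp hx).2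
    rw [hθ, ← le_sub_iff_add_le]
    apply Finset.sup'_le
    intro z _
    rw [le_sub_iff_add_le]
    refine le_trans ?_ (Finset.le_sup' _ (Finset.mem_univ z))
    calc (∑ j : Fin n, φ j (x j) z) + ∑ j ∈ Finset.univ \ {i}, (b j (x j) - m j (x j))
        = φ i v z + ∑ j ∈ Finset.univ \ {i},
            (φ j (x j) z - m j (x j) + b j (x j)) := by
          rw [Finset.sum_eq_add_sum_sdiff_singleton_of_mem (Finset.mem_univ i)
            (fun j => φ j (x j) z), hxi, add_assoc, ← Finset.sum_add_distrib]
          congr 1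
          exact Finset.sum_congr rfl (fun j _ => by ring)
      _ ≤ φ i v z + ∑ j ∈ Finset.univ \ {i},
            Finset.sup' Finset.univ ⟨v, Finset.mem_univ v⟩
              (fun u : Fin d => φ j u z - m j u + b j u) := by
          gcongr with j hj
          exact Finset.le_sup' (fun u : Fin d => φ j u z - m j u + b j u) (Finset.mem_univ (x j))
  · apply Finset.sup'_le
    intro z _
    have h : ∀ j : Fin n, ∃ u ∈ (Finset.univ : Finset (Fin d)),
        Finset.sup' Finset.univ ⟨v, Finset.mem_univ v⟩
          (fun u : Fin d => φ j u z - m j u + b j u) = φ j u z - m j u + b j u :=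
      fun j => Finset.exists_mem_eq_sup' _ _
    choose g _ hg using h
    set x : Fin n → Fin d := Function.update g i v with hxdef
    have hxi : x i = v := Function.update_self i v g
    have hxj : ∀ j ∈ Finset.univ \ {i}, x j = g j := by
      intro j hj
      have : j ≠ i := by simpa using (Finset.mem_sdiff.mp hj).2
      exact Function.update_of_ne this v g
    have hxmem : x ∈ Finset.univ.filter fun x : Fin n → Fin d => x i = v :=
      Finset.mem_filter.mpr ⟨Finset.mem_univ _, hxi⟩
    refine le_trans ?_ (Finset.le_sup' _ hxmem)
    calc φ i v z + ∑ j ∈ Finset.univ \ {i},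
            Finset.sup' Finset.univ ⟨v, Finset.mem_univ v⟩
              (fun u : Fin d => φ j u z - m j u + b j u)
        = (∑ j : Fin n, φ j (x j) z) + ∑ j ∈ Finset.univ \ {i}, (b j (x j) - m j (x j)) := by
          rw [Finset.sum_eq_add_sum_sdiff_singleton_of_mem (Finset.mem_univ i)
            (fun j => φ j (x j) z), hxi, add_assoc, ← Finset.sum_add_distrib]
          congr 1
          refine Finset.sum_congr rfl (fun j hj => ?_)
          rw [hg j, hxj j hj]
          ring
      _ ≤ θ x + ∑ j ∈ Finset.univ \ {i}, (b j (x j) - m j (x j)) := by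
          gcongr
          rw [hθ]
          exact Finset.le_sup' (fun z => ∑ j : Fin n, φ j (x j) z) (Finset.mem_univ z)
end

section
/- Lossless aggregation by maximization (Lemma 3): let k, l be natural numbers with k ≥ 1 and l ≥ 1. Then there exists a family of matrices Q : Fin l → Matrix (Fin l × Fin k) (Fin k) ℝ such that for every family of nonnegative vectors f : Fin l → Fin k → ℝ (i.e. 0 ≤ f i s for all i, s) and every pair (j, s) : Fin l × Fin k, the maximum over i : Fin l of ((Q i).mulVec (f i)) (j, s) equals f j s. -/
/-- Lossless aggregation by maximization (Lemma 3). -/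
theorem lossless_max_aggregation (k l : ℕ) (hk : 1 ≤ k) (hl : 1 ≤ l) :
    ∃ Q : Fin l → Matrix (Fin l × Fin k) (Fin k) ℝ,
      ∀ f : Fin l → Fin k → ℝ, (∀ i s, 0 ≤ f i s) →
        ∀ (j : Fin l) (s : Fin k),
          Finset.sup' Finset.univ ⟨⟨0, hl⟩, Finset.mem_univ _⟩
            (fun i : Fin l => (Q i).mulVec (f i) (j, s)) = f j s := by
  refine ⟨fun i => Matrix.of (fun p t => if i = p.1 ∧ p.2 = t then 1 else 0), ?_⟩
  intro f hf j s
  have hmv : ∀ i : Fin l,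
      (Matrix.of (fun (p : Fin l × Fin k) t => if i = p.1 ∧ p.2 = t then (1:ℝ) else 0)).mulVec
        (f i) (j, s) = if i = j then f i s else 0 := by
    intro i
    simp only [Matrix.mulVec, dotProduct, Matrix.of_apply]
    by_cases h : i = j
    · subst h
      simp [ite_and, Finset.sum_ite_eq, eq_comm]
    · simp [h]
  apply le_antisymm
  · apply Finset.sup'_le
    intro i _
    rw [hmv i]
    split
    · next h => subst h; exact le_refl _
    · exact hf j s
  · have := Finset.le_sup' (fun i : Fin l =>
      (Matrix.of (fun (p : Fin l × Fin k) t => if i = p.1 ∧ p.2 = t then (1:ℝ) else 0)).mulVec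
        (f i) (j, s)) (Finset.mem_univ j)
    simpa [hmv j] using this
end

section
/- Recovering column sums from max-aggregation (Proposition 4): let k, l be natural numbers with k ≥ 1 and l ≥ 1. Then there exists a constant tensor W : Fin k → Fin l → (Fin k × Fin l) → ℝ and a constant matrix Q : Matrix (Fin l) (Fin k × Fin l) ℝ such that for every matrix X : Fin k → Fin l → ℝ with nonnegative entries (0 ≤ X i j for all i, j) and every j : Fin l, ∑ i : Fin k, X i j equals ∑ r : Fin k × Fin l, Q j r * (maximum over i : Fin k of ∑ j' : Fin l, X i j' * W i j' r). -/
/-- Recovering column sums from max-aggregation (Proposition 4). -/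
theorem column_sums_from_max_aggregation (k l : ℕ) (hk : 1 ≤ k) (hl : 1 ≤ l) :
    ∃ (W : Fin k → Fin l → (Fin k × Fin l) → ℝ)
      (Q : Matrix (Fin l) (Fin k × Fin l) ℝ),
      ∀ X : Fin k → Fin l → ℝ, (∀ i j, 0 ≤ X i j) →
        ∀ j : Fin l,
          ∑ i : Fin k, X i j
            = ∑ r : Fin k × Fin l, Q j r *
                Finset.sup' Finset.univ ⟨⟨0, hk⟩, Finset.mem_univ _⟩
                  (fun i : Fin k => ∑ j' : Fin l, X i j' * W i j' r) := by
  refine ⟨fun i j' r => if i = r.1 ∧ j' = r.2 then 1 else 0,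
          fun j r => if r.2 = j then 1 else 0, fun X hX j => ?_⟩
  have hsum : ∀ (r : Fin k × Fin l) (i : Fin k),
      (∑ j' : Fin l, X i j' * if i = r.1 ∧ j' = r.2 then (1:ℝ) else 0)
        = if i = r.1 then X r.1 r.2 else 0 := by
    intro r i
    by_cases hi : i = r.1
    · subst hi
      simp [Finset.sum_ite_eq', mul_ite]
    · simp [hi]
  have hsup : ∀ r : Fin k × Fin l,
      Finset.sup' Finset.univ ⟨⟨0, hk⟩, Finset.mem_univ _⟩
        (fun i : Fin k => ∑ j' : Fin l, X i j' *
          if i = r.1 ∧ j' = r.2 then (1:ℝ) else 0) = X r.1 r.2 := by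
    intro r
    apply le_antisymm
    · apply Finset.sup'_le
      intro i _
      rw [hsum]
      split <;> simp [hX]
    · refine le_trans ?_ (Finset.le_sup' _ (Finset.mem_univ r.1))
      rw [hsum]
      simp
  calc ∑ i : Fin k, X i j
      = ∑ r : Fin k × Fin l, (if r.2 = j then (1:ℝ) else 0) * X r.1 r.2 := by
        rw [← Finset.univ_product_univ, Finset.sum_product]
        simp [Finset.sum_ite_eq']
    _ = _ := by
        refine Finset.sum_congr rfl fun r _ => ?_
        rw [hsup]
end

section
/- Matrix form of the low-rank Sum-Product message update: let n, d, R be natural numbers with n ≥ 1 and d ≥ 1, let W : Fin n → Matrix (Fin d) (Fin R) ℝ, and define the factor potential φ : (Fin n → Fin d) → ℝ by φ x = ∑ r : Fin R, ∏ j : Fin n, W j (x j) r. Then for every family of messages m : Fin n → Fin d → ℝ and every i : Fin n, the vector v ↦ ∑ over x : Fin n → Fin d with x i = v of φ x * ∏ j ∈ (Finset.univ \ {i}), m j (x j) equals (W i).mulVec (fun r => ∏ j ∈ (Finset.univ \ {i}), ((W j)ᵀ.mulVec (m j)) r). -/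
open Matrix

/-- Matrix form of the low-rank Sum-Product message update. -/
theorem lowrank_sum_product_matrix_form (n d R : ℕ) (hn : 1 ≤ n) (hd : 1 ≤ d)
    (W : Fin n → Matrix (Fin d) (Fin R) ℝ)
    (φ : (Fin n → Fin d) → ℝ)
    (hφ : ∀ x, φ x = ∑ r : Fin R, ∏ j : Fin n, W j (x j) r)
    (m : Fin n → Fin d → ℝ) (i : Fin n) :
    (fun v : Fin d =>
        ∑ x ∈ Finset.univ.filter (fun x : Fin n → Fin d => x i = v),
          φ x * ∏ j ∈ Finset.univ \ {i}, m j (x j))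
      = (W i).mulVec (fun r => ∏ j ∈ Finset.univ \ {i}, ((W j)ᵀ.mulVec (m j)) r) := by
  funext v
  simp only [hφ, Finset.sum_mul, mulVec, dotProduct, transpose_apply]
  rw [Finset.sum_comm]
  refine Finset.sum_congr rfl fun r _ => ?_
  -- indicator-style per-variable factor
  set h : Fin n → Fin d → ℝ := fun j a =>
    if j = i then (if a = v then W i a r else 0) else W j a r * m j a with hh
  have hfilter : ∀ x ∈ Finset.univ.filter (fun x : Fin n → Fin d => x i = v),
      (∏ j, W j (x j) r) * ∏ j ∈ Finset.univ \ {i}, m j (x j) = ∏ j, h j (x j) := by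
    intro x hx
    have hxi : x i = v := (Finset.mem_filter.mp hx).2
    rw [Finset.prod_eq_mul_prod_sdiff_singleton_of_mem (Finset.mem_univ i) (fun j => W j (x j) r),
        Finset.prod_eq_mul_prod_sdiff_singleton_of_mem (Finset.mem_univ i) (fun j => h j (x j))]
    have h1 : h i (x i) = W i v r := by simp [hh, hxi]
    rw [h1, hxi, mul_assoc, ← Finset.prod_mul_distrib]
    congr 1
    refine Finset.prod_congr rfl fun j hj => ?_
    have : j ≠ i := by simpa using (Finset.mem_sdiff.mp hj).2
    simp [hh, this]
  rw [Finset.sum_congr rfl hfilter]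
  have hext : ∑ x ∈ Finset.univ.filter (fun x : Fin n → Fin d => x i = v),
      ∏ j, h j (x j) = ∑ x : Fin n → Fin d, ∏ j, h j (x j) := by
    rw [Finset.sum_filter]
    refine Finset.sum_congr rfl fun x _ => ?_
    by_cases hxi : x i = v
    · simp [hxi]
    · have : h i (x i) = 0 := by simp [hh, hxi]
      rw [if_neg hxi, Finset.prod_eq_zero (Finset.mem_univ i) this]
  rw [hext]
  have := (Finset.prod_univ_sum (fun _ : Fin n => (Finset.univ : Finset (Fin d))) h).symm
  rw [Fintype.piFinset_univ] at this
  rw [this,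
    Finset.prod_eq_mul_prod_sdiff_singleton_of_mem (Finset.mem_univ i) (fun j => ∑ a, h j a)]
  have h2 : ∑ a, h i a = W i v r := by simp [hh]
  rw [h2]
  congr 1
  refine Finset.prod_congr rfl fun j hj => ?_
  have : j ≠ i := by simpa using (Finset.mem_sdiff.mp hj).2
  simp [hh, this]
end
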